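/- Let R₊ = {e₁, e₂, 2e₁, 2e₂, e₁+e₂, e₁−e₂} ⊂ ℝ² (the positive roots of type BC₂), and fix positive integers m_s, m_l, m_m; define m(e₁) = m(e₂) = m_s, m(2e₁) = m(2e₂) = m_l, and m(e₁+e₂) = m(e₁−e₂) = m_m. Let H = (1 + 1/√2, 1/√2) (that is, H = e₁ + (e₁+e₂)/√2), and for α ∈ R₊ set v_H(α) = α/⟪α,H⟫ − H/‖H‖² (note ⟪α,H⟫ ≠ 0 for every α ∈ R₊). Let A_H be the multiset consisting of m(α) copies of v_H(α) for each α ∈ R₊. Then A_H is invariant under negation (the multiset {−x : x ∈ A_H} equals A_H) if and only if m_s + m_l = m_m. -/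

import Mathlib

open scoped RealInnerProductSpace

/-!
Since `v_H(α)` only depends on the line through `α`, the roots `eᵢ` and `2eᵢ` give the same
vector. For this particular `H` a direct computation gives `v_H(e₁) = -v_H(e₁+e₂)` and
`v_H(e₁-e₂) = -v_H(e₂)`, so with `a = v_H(e₁+e₂)`, `b = v_H(e₂)` the multiset is
`(m_s+m_l)·{-a, b} + m_m·{a, -b}`. Negation swaps the two halves, and as `a ∉ {-a, b, -b}`,
counting `a` on both sides forces `m_s + m_l = m_m`.
-/

section InnerProductSpace

variable {E : Type*} [NormedAddCommGroup E] [InnerProductSpace ℝ E]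

noncomputable def vH (H α : E) : E := ⟪α, H⟫⁻¹ • α - (‖H‖ ^ 2)⁻¹ • H

theorem vH_smul (H α : E) {t : ℝ} (ht : t ≠ 0) : vH H (t • α) = vH H α := by
  rw [vH, vH, real_inner_smul_left, mul_inv_rev, smul_smul, inv_mul_cancel_right₀ ht]

end InnerProductSpace

open Multiset in
theorem map_neg_replicate_eq_self_iff {G : Type*} [AddGroup G] {a b : G}
    (ha : a ≠ -a) (hab : a ≠ b) (hab' : a ≠ -b) (p q : ℕ) :
    (replicate p (-a) + replicate p b + replicate q a + replicate q (-b)).map (fun x => -x)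
      = replicate p (-a) + replicate p b + replicate q a + replicate q (-b) ↔ p = q := by
  classical
  simp only [map_add, map_replicate, neg_neg]
  refine ⟨fun h => ?_, fun h => h ▸ by abel⟩
  simpa [count_replicate, ha, hab, hab', ha.symm, hab.symm, hab'.symm] using
    congrArg (count a) h

theorem EuclideanSpace.eq_of_fin_two {x y : EuclideanSpace ℝ (Fin 2)} (h₀ : x 0 = y 0)
    (h₁ : x 1 = y 1) : x = y := by
  ext i; fin_cases i
  exacts [h₀, h₁]

section BC₂

open EuclideanSpace

noncomputable def H₀ : EuclideanSpace ℝ (Fin 2) :=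
  single 0 (1 : ℝ) + (√2)⁻¹ • (single 0 (1 : ℝ) + single 1 1)

theorem H₀_apply_zero : H₀ 0 = 1 + (√2)⁻¹ := by simp [H₀]

theorem H₀_apply_one : H₀ 1 = (√2)⁻¹ := by simp [H₀]

theorem inner_H₀ (x : EuclideanSpace ℝ (Fin 2)) :
    ⟪x, H₀⟫ = x 0 * (1 + (√2)⁻¹) + x 1 * (√2)⁻¹ := by
  simp [PiLp.inner_apply, Fin.sum_univ_two, H₀_apply_zero, H₀_apply_one, mul_comm]

theorem norm_H₀_sq : ‖H₀‖ ^ 2 = 2 + √2 := by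
  have h : √2 ^ 2 = 2 := by simp
  rw [← real_inner_self_eq_norm_sq, inner_H₀, H₀_apply_zero, H₀_apply_one]
  field_simp
  grind

theorem vH_H₀_single_zero : vH H₀ (single 0 1) = -!₂[√2 - 3/2, (√2 - 1)/2] := by
  have h : √2 ^ 2 = 2 := by simp
  rw [vH, inner_H₀, norm_H₀_sq]
  refine eq_of_fin_two ?_ ?_ <;>
    simp only [PiLp.sub_apply, PiLp.smul_apply, PiLp.neg_apply, smul_eq_mul, PiLp.single_apply,
      H₀_apply_zero, H₀_apply_one, Matrix.cons_val_zero, Matrix.cons_val_one, Matrix.cons_val_fin_one] <;>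
    field_simp <;> grind

theorem vH_H₀_single_one : vH H₀ (single 1 1) = !₂[-1/2, (√2 + 1)/2] := by
  have h : √2 ^ 2 = 2 := by simp
  rw [vH, inner_H₀, norm_H₀_sq]
  refine eq_of_fin_two ?_ ?_ <;>
    simp only [PiLp.sub_apply, PiLp.smul_apply, smul_eq_mul, PiLp.single_apply,
      H₀_apply_zero, H₀_apply_one, Matrix.cons_val_zero, Matrix.cons_val_one, Matrix.cons_val_fin_one] <;>
    field_simp <;> grind

theorem vH_H₀_add : vH H₀ (single 0 1 + single 1 1) = !₂[√2 - 3/2, (√2 - 1)/2] := by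
  have h : √2 ^ 2 = 2 := by simp
  rw [vH, inner_H₀, norm_H₀_sq]
  refine eq_of_fin_two ?_ ?_ <;>
    simp only [PiLp.add_apply, PiLp.sub_apply, PiLp.smul_apply, smul_eq_mul, PiLp.single_apply,
      H₀_apply_zero, H₀_apply_one, Matrix.cons_val_zero, Matrix.cons_val_one, Matrix.cons_val_fin_one] <;>
    field_simp <;> grind

theorem vH_H₀_sub : vH H₀ (single 0 1 - single 1 1) = -!₂[-1/2, (√2 + 1)/2] := by
  have h : √2 ^ 2 = 2 := by simp
  rw [vH, inner_H₀, norm_H₀_sq]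
  refine eq_of_fin_two ?_ ?_ <;>
    simp only [PiLp.sub_apply, PiLp.smul_apply, PiLp.neg_apply, smul_eq_mul, PiLp.single_apply,
      H₀_apply_zero, H₀_apply_one, Matrix.cons_val_zero, Matrix.cons_val_one, Matrix.cons_val_fin_one] <;>
    field_simp <;> grind

end BC₂

theorem stmt_19_general (m_s m_l m_m : ℕ)
    (H : EuclideanSpace ℝ (Fin 2))
    (hH : H = EuclideanSpace.single 0 (1 : ℝ)
      + (Real.sqrt 2)⁻¹ • (EuclideanSpace.single 0 (1 : ℝ) + EuclideanSpace.single 1 1))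
    (v : EuclideanSpace ℝ (Fin 2) → EuclideanSpace ℝ (Fin 2))
    (hv : ∀ α, v α = (⟪α, H⟫)⁻¹ • α - (‖H‖ ^ 2)⁻¹ • H)
    (A : Multiset (EuclideanSpace ℝ (Fin 2)))
    (hA : A = Multiset.replicate m_s (v (EuclideanSpace.single 0 (1 : ℝ)))
      + Multiset.replicate m_s (v (EuclideanSpace.single 1 (1 : ℝ)))
      + Multiset.replicate m_l (v ((2 : ℝ) • EuclideanSpace.single 0 (1 : ℝ)))
      + Multiset.replicate m_l (v ((2 : ℝ) • EuclideanSpace.single 1 (1 : ℝ)))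
      + Multiset.replicate m_m
          (v (EuclideanSpace.single 0 (1 : ℝ) + EuclideanSpace.single 1 1))
      + Multiset.replicate m_m
          (v (EuclideanSpace.single 0 (1 : ℝ) - EuclideanSpace.single 1 1))) :
    A.map (fun x => -x) = A ↔ m_s + m_l = m_m := by
  obtain rfl : H = H₀ := hH
  obtain rfl : v = vH H₀ := funext hv
  rw [vH_smul _ _ two_ne_zero, vH_smul _ _ two_ne_zero, vH_H₀_single_zero, vH_H₀_single_one,
    vH_H₀_add, vH_H₀_sub] at hA
  set a : EuclideanSpace ℝ (Fin 2) := !₂[√2 - 3/2, (√2 - 1)/2]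
  set b : EuclideanSpace ℝ (Fin 2) := !₂[-1/2, (√2 + 1)/2]
  have hA' : A = Multiset.replicate (m_s + m_l) (-a) + Multiset.replicate (m_s + m_l) b
      + Multiset.replicate m_m a + Multiset.replicate m_m (-b) := by
    rw [hA, Multiset.replicate_add, Multiset.replicate_add]
    abel
  have h : √2 ^ 2 = 2 := by simp
  rw [hA']
  refine map_neg_replicate_eq_self_iff ?_ ?_ ?_ _ _ <;> refine ne_of_apply_ne (· 0) ?_ <;>
    simp only [a, b, PiLp.neg_apply, Matrix.cons_val_zero] <;> intro hcoord <;> nlinarith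

/-- For the restricted root system of type `BC₂` with multiplicities
`m_s` (short roots `e₁, e₂`), `m_l` (long roots `2e₁, 2e₂`), and `m_m`
(middle roots `e₁ ± e₂`), and `H = e₁ + (e₁+e₂)/√2`, the multiplicity-weighted
multiset `A_H` of vectors `v_H(α) = α/⟪α,H⟫ - H/‖H‖²` is invariant under
negation iff `m_s + m_l = m_m`. -/
theorem stmt_19 (m_s m_l m_m : ℕ) (hms : 0 < m_s) (hml : 0 < m_l) (hmm : 0 < m_m)
    (H : EuclideanSpace ℝ (Fin 2))
    (hH : H = EuclideanSpace.single 0 (1 : ℝ)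
      + (Real.sqrt 2)⁻¹ • (EuclideanSpace.single 0 (1 : ℝ) + EuclideanSpace.single 1 1))
    (v : EuclideanSpace ℝ (Fin 2) → EuclideanSpace ℝ (Fin 2))
    (hv : ∀ α, v α = (⟪α, H⟫)⁻¹ • α - (‖H‖ ^ 2)⁻¹ • H)
    (A : Multiset (EuclideanSpace ℝ (Fin 2)))
    (hA : A = Multiset.replicate m_s (v (EuclideanSpace.single 0 (1 : ℝ)))
      + Multiset.replicate m_s (v (EuclideanSpace.single 1 (1 : ℝ)))
      + Multiset.replicate m_l (v ((2 : ℝ) • EuclideanSpace.single 0 (1 : ℝ)))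
      + Multiset.replicate m_l (v ((2 : ℝ) • EuclideanSpace.single 1 (1 : ℝ)))
      + Multiset.replicate m_m
          (v (EuclideanSpace.single 0 (1 : ℝ) + EuclideanSpace.single 1 1))
      + Multiset.replicate m_m
          (v (EuclideanSpace.single 0 (1 : ℝ) - EuclideanSpace.single 1 1))) :
    A.map (fun x => -x) = A ↔ m_s + m_l = m_m :=
  stmt_19_general m_s m_l m_m H hH v hv A hA
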